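/- If h and k are independent random variables each with density (2/π)/(x²+1) on (0,∞), then ℓ = h + k has density (8/π²)·(ℓ·arctan(ℓ) + ln(ℓ²+1))/((ℓ²+4)·ℓ) for ℓ > 0. -/

import Mathlib

/-!
For independent `X`, `Y` with densities, the density of `X + Y` is the convolution of the
densities; a density of total mass one already forces the law to be absolutely continuous.
For the half-Cauchy density the convolution at `l > 0` is `4 / π²` times
`∫₀ˡ dx / ((1 + x²)(1 + (l - x)²))`, and the partial fraction decomposition
`1 / ((1 + x²)(1 + (l - x)²)) = ((2x + l) / (1 + x²) + (2(l - x) + l) / (1 + (l - x)²)) / (l(l² + 4))`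
gives the primitive `(log (1 + x²) - log (1 + (l - x)²) + l (arctan x - arctan (l - x))) / (l(l² + 4))`.
-/

open Real MeasureTheory ProbabilityTheory
open scoped ENNReal

theorem ProbabilityTheory.hasPDF_of_lintegral_pdf_eq_one {Ω E : Type*} [MeasurableSpace Ω]
    [MeasurableSpace E] {P : Measure Ω} [IsProbabilityMeasure P] {μ : Measure E} {X : Ω → E}
    (h : ∫⁻ x, pdf X P μ x ∂μ = 1) : HasPDF X P μ := by
  have hX : AEMeasurable X P := aemeasurable_of_pdf_ne_zero X fun h0 => by
    rw [lintegral_congr_ae h0] at h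
    simp at h
  -- `μ.withDensity (pdf X P μ) ≤ map X P` and both have mass one, so there is no singular part.
  have := Measure.isProbabilityMeasure_map (μ := P) hX
  have : IsProbabilityMeasure (μ.withDensity (pdf X P μ)) :=
    ⟨by rw [withDensity_apply _ .univ, Measure.restrict_univ, h]⟩
  exact hasPDF_of_map_eq_withDensity hX _ (measurable_pdf X P μ).aemeasurable
    (Measure.eq_of_le_of_isProbabilityMeasure (withDensity_pdf_le_map X P μ)).symm

theorem MeasureTheory.lconvolution_congr_ae {G : Type*} [AddGroup G] [MeasurableSpace G]
    [MeasurableAdd₂ G] [MeasurableNeg G] {μ : Measure G} [SFinite μ] [μ.IsAddLeftInvariant]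
    {f f' g g' : G → ℝ≥0∞} (hf : f =ᵐ[μ] f') (hg : g =ᵐ[μ] g') :
    f ⋆ₗ[μ] g = f' ⋆ₗ[μ] g' := by
  ext x
  have hg' : (fun y => g (-y + x)) =ᵐ[μ] fun y => g' (-y + x) :=
    ((quasiMeasurePreserving_add_right μ x).comp (quasiMeasurePreserving_neg μ)).ae_eq hg
  refine lintegral_congr_ae ?_
  filter_upwards [hf, hg'] with y hfy hgy
  rw [hfy, hgy]

theorem lconvolution_ofReal_ite_pos {g₁ g₂ : ℝ → ℝ} (hg₁ : Continuous g₁) (hg₂ : Continuous g₂)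
    (h₁ : ∀ x, 0 ≤ g₁ x) (h₂ : ∀ x, 0 ≤ g₂ x) (l : ℝ) :
    ((fun x => ENNReal.ofReal (if 0 < x then g₁ x else 0)) ⋆ₗ
      (fun x => ENNReal.ofReal (if 0 < x then g₂ x else 0))) l =
      ENNReal.ofReal (if 0 < l then ∫ x in 0..l, g₁ x * g₂ (l - x) else 0) := by
  set F : ℝ → ℝ := fun x => g₁ x * g₂ (l - x)
  have hF : Continuous F := hg₁.mul (hg₂.comp (continuous_const.sub continuous_id))
  have hF₀ : ∀ x, 0 ≤ F x := fun x => mul_nonneg (h₁ x) (h₂ _)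
  have hprod : ∀ y, (if 0 < y then g₁ y else 0) * (if 0 < -y + l then g₂ (-y + l) else 0) =
      (Set.Ioo 0 l).indicator F y := by
    intro y
    by_cases hy : 0 < y <;> by_cases hyl : y < l <;>
      simp [F, Set.indicator, hy, hyl, neg_add_eq_sub, sub_pos]
  have hint : Integrable ((Set.Ioo 0 l).indicator F) :=
    (integrable_indicator_iff measurableSet_Ioo).2
      ((hF.continuousOn.integrableOn_Icc).mono_set Set.Ioo_subset_Icc_self)
  calc ((fun x => ENNReal.ofReal (if 0 < x then g₁ x else 0)) ⋆ₗ
        (fun x => ENNReal.ofReal (if 0 < x then g₂ x else 0))) l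
      = ∫⁻ y, ENNReal.ofReal ((Set.Ioo 0 l).indicator F y) := by
        refine lintegral_congr fun y => ?_
        rw [← hprod, ENNReal.ofReal_mul (by split_ifs <;> simp [h₁])]
    _ = ENNReal.ofReal (∫ y in Set.Ioo 0 l, F y) := by
        rw [← ofReal_integral_eq_lintegral_ofReal hint
          (.of_forall (Set.indicator_nonneg fun y _ => hF₀ y)), integral_indicator measurableSet_Ioo]
    _ = _ := by
        split_ifs with hl
        · rw [← integral_Ioc_eq_integral_Ioo, intervalIntegral.integral_of_le hl.le]
        · rw [Set.Ioo_eq_empty (by simpa using hl), Measure.restrict_empty, integral_zero_measure]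

theorem integral_inv_one_add_sq_mul_inv_one_add_sub_sq {l : ℝ} (hl : l ≠ 0) :
    ∫ x in 0..l, (1 + x ^ 2)⁻¹ * (1 + (l - x) ^ 2)⁻¹ =
      2 * (l * arctan l + log (1 + l ^ 2)) / (l * (l ^ 2 + 4)) := by
  have hprim : ∀ x : ℝ, HasDerivAt
      (fun x => (log (1 + x ^ 2) - log (1 + (l - x) ^ 2) + l * (arctan x - arctan (l - x))) /
        (l * (l ^ 2 + 4)))
      ((1 + x ^ 2)⁻¹ * (1 + (l - x) ^ 2)⁻¹) x := by
    intro x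
    have h₁ : 1 + x ^ 2 ≠ 0 := by positivity
    have h₂ : 1 + (l - x) ^ 2 ≠ 0 := by positivity
    have hsub : HasDerivAt (fun x : ℝ => l - x) (-1) x := by
      simpa using (hasDerivAt_id x).const_sub l
    have hd := ((((hasDerivAt_id x).pow 2).const_add 1).log h₁).sub
      (((hsub.pow 2).const_add 1).log h₂) |>.add
      (((hasDerivAt_id x).arctan.sub hsub.arctan).const_mul l) |>.div_const (l * (l ^ 2 + 4))
    refine hd.congr_deriv ?_
    simp only [id, Pi.pow_apply]
    field_simp
    ring
  have hcont : Continuous fun x : ℝ => (1 + x ^ 2)⁻¹ * (1 + (l - x) ^ 2)⁻¹ := by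
    fun_prop (disch := intro x; positivity)
  rw [intervalIntegral.integral_eq_sub_of_hasDerivAt (fun x _ => hprim x)
    (hcont.intervalIntegrable 0 l)]
  simp only [sub_self, sub_zero, arctan_zero, zero_sub, zero_pow two_ne_zero, add_zero, log_one]
  ring_nf

noncomputable def halfCauchyPDF (x : ℝ) : ℝ≥0∞ :=
  ENNReal.ofReal (if 0 < x then 2 / π / (x ^ 2 + 1) else 0)

theorem lintegral_halfCauchyPDF : ∫⁻ x, halfCauchyPDF x = 1 := by
  have hint : IntegrableOn (fun x : ℝ => 2 / π / (x ^ 2 + 1)) (Set.Ioi 0) :=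
    (integrable_inv_one_add_sq.const_mul (2 / π)).integrableOn.congr_fun
      (fun x _ => by dsimp only; rw [add_comm]; ring) measurableSet_Ioi
  calc ∫⁻ x, halfCauchyPDF x = ∫⁻ x in Set.Ioi 0, ENNReal.ofReal (2 / π / (x ^ 2 + 1)) := by
        rw [← lintegral_indicator measurableSet_Ioi]
        congr with x
        by_cases hx : 0 < x <;> simp [halfCauchyPDF, hx]
    _ = ENNReal.ofReal (2 / π * ∫ x in Set.Ioi 0, (1 + x ^ 2)⁻¹) := by
        rw [← ofReal_integral_eq_lintegral_ofReal hint (.of_forall fun x => by positivity),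
          ← integral_const_mul]
        simp only [div_eq_mul_inv, add_comm]
    _ = 1 := by
        rw [integral_Ioi_inv_one_add_sq, arctan_zero]
        field_simp
        simp

theorem halfCauchyPDF_lconvolution_self (l : ℝ) :
    (halfCauchyPDF ⋆ₗ halfCauchyPDF) l = ENNReal.ofReal (if 0 < l then
      8 / π ^ 2 * (l * arctan l + log (l ^ 2 + 1)) / ((l ^ 2 + 4) * l) else 0) := by
  have hcont : Continuous fun x : ℝ => 2 / π / (x ^ 2 + 1) := by
    fun_prop (disch := intro x; positivity)
  have hnonneg : ∀ x : ℝ, 0 ≤ 2 / π / (x ^ 2 + 1) := fun x => by positivity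
  refine (lconvolution_ofReal_ite_pos hcont hcont hnonneg hnonneg l).trans ?_
  split_ifs with hl
  · congr 1
    calc ∫ x in 0..l, 2 / π / (x ^ 2 + 1) * (2 / π / ((l - x) ^ 2 + 1))
        = ∫ x in 0..l, 4 / π ^ 2 * ((1 + x ^ 2)⁻¹ * (1 + (l - x) ^ 2)⁻¹) := by
          congr with x
          field_simp
          ring
      _ = _ := by
          rw [intervalIntegral.integral_const_mul,
            integral_inv_one_add_sq_mul_inv_one_add_sub_sq hl.ne', add_comm 1 (l ^ 2)]
          field_simp
          ring
  · rfl

theorem stmt_5 {Ω : Type*} [MeasureSpace Ω] [IsProbabilityMeasure (ℙ : Measure Ω)]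
    (X Y : Ω → ℝ) (hXY : ProbabilityTheory.IndepFun X Y ℙ)
    (hX : pdf X ℙ volume =ᵐ[volume]
      fun x => ENNReal.ofReal (if 0 < x then (2 / Real.pi) / (x ^ 2 + 1) else 0))
    (hY : pdf Y ℙ volume =ᵐ[volume]
      fun x => ENNReal.ofReal (if 0 < x then (2 / Real.pi) / (x ^ 2 + 1) else 0)) :
    pdf (fun ω => X ω + Y ω : Ω → ℝ) (ℙ : MeasureTheory.Measure Ω) (volume : MeasureTheory.Measure ℝ) =ᵐ[volume]
      fun l => ENNReal.ofReal (if 0 < l then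
        (8 / Real.pi ^ 2) * (l * Real.arctan l + Real.log (l ^ 2 + 1)) / ((l ^ 2 + 4) * l)
        else 0) := by
  have : HasPDF X ℙ := hasPDF_of_lintegral_pdf_eq_one <| by
    rw [lintegral_congr_ae hX]
    exact lintegral_halfCauchyPDF
  have : HasPDF Y ℙ := hasPDF_of_lintegral_pdf_eq_one <| by
    rw [lintegral_congr_ae hY]
    exact lintegral_halfCauchyPDF
  calc pdf (fun ω => X ω + Y ω) ℙ volume = pdf (X + Y) ℙ volume := rfl
    _ =ᵐ[volume] pdf X ℙ ⋆ₗ pdf Y ℙ := hXY.pdf_add_eq_lconvolution_pdf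
    _ = halfCauchyPDF ⋆ₗ halfCauchyPDF := lconvolution_congr_ae hX hY
    _ = _ := funext halfCauchyPDF_lconvolution_self
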